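/- Let Ω ⊂ ℝ^r be compact and let d_{SW_1} be the Sliced 1-Wasserstein distance on probability measures on Ω, d_{SW_1}(P,Q) = ∫_{S^{r−1}} ∫_0^1 |F_{θ*_#P}^{[-1]}(t) − F_{θ*_#Q}^{[-1]}(t)| dt dσ(θ). Then the square root √d_{SW_1} is Hilbertian: there exist a real Hilbert space F and a map Φ from the probability measures on Ω into F such that d_{SW_1}(P,Q) = ‖Φ(P) − Φ(Q)‖²_F for all P, Q. -/

import Mathlib

open MeasureTheory
open scoped RealInnerProductSpace

/-- The generalized inverse cumulative distribution function (quantile function) of a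
probability measure `μ` on `ℝ`: `F_μ^{[-1]}(t) = inf {x : F_μ(x) ≥ t}` where
`F_μ(x) = μ((−∞, x])`. -/
noncomputable def invCDF (μ : Measure ℝ) (t : ℝ) : ℝ :=
  sInf {x : ℝ | t ≤ (μ (Set.Iic x)).toReal}

/-- The uniform probability measure on the unit sphere `S^{r-1} ⊂ ℝ^r`
(the normalized surface measure). -/
noncomputable def uniformSphere (r : ℕ) :
    Measure (Metric.sphere (0 : EuclideanSpace ℝ (Fin r)) 1) :=
  ((volume : Measure (EuclideanSpace ℝ (Fin r))).toSphere Set.univ)⁻¹ •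
    (volume : Measure (EuclideanSpace ℝ (Fin r))).toSphere

/-- The Sliced 1-Wasserstein distance between probability measures on `ℝ^r`:
`d_{SW₁}(P,Q) = ∫_{S^{r−1}} ∫_0^1 |F_{θ*_#P}^{[-1]}(t) − F_{θ*_#Q}^{[-1]}(t)| dt dσ(θ)`. -/
noncomputable def slicedW1 {r : ℕ} (P Q : Measure (EuclideanSpace ℝ (Fin r))) : ℝ :=
  ∫ θ : Metric.sphere (0 : EuclideanSpace ℝ (Fin r)) 1,
    (∫ t in Set.Ioc (0 : ℝ) 1,
      |invCDF (P.map fun x => ⟪x, (θ : EuclideanSpace ℝ (Fin r))⟫) t -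
        invCDF (Q.map fun x => ⟪x, (θ : EuclideanSpace ℝ (Fin r))⟫) t|) ∂(uniformSphere r)

/-!
For `a, b ∈ [l, u]` we have `|a - b| = ∫_l^u (1_{s ≤ a} - 1_{s ≤ b})² ds`, so
`f ↦ ((x, s) ↦ 1_{s ≤ f x})` turns the `L¹` distance between `[l, u]`-valued functions into
a squared `L²` distance. By Fubini, `d_{SW₁}(P, Q)` is the `L¹(σ ⊗ dt)` distance between the
quantile functions `(θ, t) ↦ F_{θ*_#P}^{[-1]}(t)`, which take values in `[-R, R]` when `Ω`
lies in the ball of radius `R`.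
-/

open Set ProbabilityTheory

section Quantile

variable {ν : Measure ℝ} {t : ℝ}

lemma invCDF_eq_sInf_cdf [IsProbabilityMeasure ν] (t : ℝ) :
    invCDF ν t = sInf {x | t ≤ cdf ν x} := by
  simp only [invCDF, cdf_eq_real, measureReal_def]

lemma invCDF_of_notMem_Ioc [IsProbabilityMeasure ν] (ht : t ∉ Ioc 0 1) : invCDF ν t = 0 := by
  rw [invCDF_eq_sInf_cdf]
  rcases not_and_or.mp ht with ht | ht
  · have h : {x | t ≤ cdf ν x} = univ :=
      eq_univ_of_forall fun x => (not_lt.mp ht).trans (cdf_nonneg ν x)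
    rw [h, Real.sInf_of_not_bddBelow not_bddBelow_univ]
  · have h : {x | t ≤ cdf ν x} = ∅ :=
      eq_empty_of_forall_notMem fun x hx => ht ((cdf_le_one ν x).trans' hx)
    rw [h, Real.sInf_empty]

lemma invCDF_le_iff [IsProbabilityMeasure ν] (ht : t ∈ Ioc 0 1) {b : ℝ} (hb : ν (Iic b) = 1)
    (c : ℝ) : invCDF ν t ≤ c ↔ t ≤ cdf ν c := by
  set S := {x | t ≤ cdf ν x}
  have hS : S.Nonempty := ⟨b, by simpa [S, cdf_eq_real, measureReal_def, hb] using ht.2⟩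
  obtain ⟨x₀, hx₀⟩ := ((tendsto_cdf_atBot ν).eventually (gt_mem_nhds ht.1)).exists
  have hSbdd : BddBelow S :=
    ⟨x₀, fun x hx => le_of_not_gt fun hlt => (hx.trans (monotone_cdf ν hlt.le)).not_gt hx₀⟩
  rw [invCDF_eq_sInf_cdf]
  refine ⟨fun h => ?_, fun h => csInf_le hSbdd h⟩
  have hright : ∀ y > c, t ≤ cdf ν y := fun y hy => by
    obtain ⟨x, hxS, hxy⟩ := exists_lt_of_csInf_lt hS (h.trans_lt hy)
    exact hxS.trans (monotone_cdf ν hxy.le)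
  exact ge_of_tendsto ((cdf ν).right_continuous c |>.tendsto.mono_left
    (nhdsWithin_mono c Ioi_subset_Ici_self)) (eventually_nhdsWithin_of_forall hright)

lemma invCDF_mem_Icc [IsProbabilityMeasure ν] {a b : ℝ} (hab : ν (Icc a b) = 1)
    (ht : t ∈ Ioc 0 1) : invCDF ν t ∈ Icc a b := by
  have hb : ν (Iic b) = 1 := le_antisymm prob_le_one (hab ▸ measure_mono Icc_subset_Iic_self)
  have hcompl : ν (Icc a b)ᶜ = 0 := (prob_compl_eq_zero_iff measurableSet_Icc).mpr hab
  refine ⟨le_of_forall_lt fun c hc => ?_, (invCDF_le_iff ht hb b).mpr ?_⟩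
  · have hc0 : cdf ν c = 0 := by
      rw [cdf_eq_real, measureReal_def, measure_mono_null (fun y hy => ?_) hcompl,
        ENNReal.toReal_zero]
      exact fun hy' => (hy'.1.trans hy).not_gt hc
    exact lt_of_not_ge fun h => ((invCDF_le_iff ht hb c).mp h).not_gt (hc0 ▸ ht.1)
  · rw [cdf_eq_real, measureReal_def, hb, ENNReal.toReal_one]
    exact ht.2

lemma measurable_invCDF_uncurry {α : Type*} [MeasurableSpace α] {κ : α → Measure ℝ}
    (hκ : Measurable κ) [∀ a, IsProbabilityMeasure (κ a)]
    (hb : ∀ a, ∃ b, κ a (Iic b) = 1) :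
    Measurable fun p : α × ℝ => invCDF (κ p.1) p.2 := by
  refine measurable_of_Iic fun c => ?_
  have hcdf : Measurable fun a => cdf (κ a) c := by
    simp_rw [cdf_eq_real, measureReal_def]
    exact (Measure.measurable_coe measurableSet_Iic |>.comp hκ).ennreal_toReal
  have hset : (fun p : α × ℝ => invCDF (κ p.1) p.2) ⁻¹' Iic c =
      (Prod.snd ⁻¹' Ioc 0 1).ite {p | p.2 ≤ cdf (κ p.1) c} {_p | (0 : ℝ) ≤ c} := by
    ext p
    by_cases hp : p.2 ∈ Ioc 0 1
    · simp [Set.ite, hp, invCDF_le_iff hp (hb p.1).choose_spec]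
    · simp [Set.ite, hp, invCDF_of_notMem_Ioc hp]
  rw [hset]
  exact (measurable_snd measurableSet_Ioc).ite
    (measurableSet_le measurable_snd (hcdf.comp measurable_fst)) (MeasurableSet.const _)

end Quantile

lemma integral_sq_indicator_Iic_sub {l u a b : ℝ} (ha : a ∈ Icc l u) (hb : b ∈ Icc l u) :
    ∫ s in Icc l u, ((Iic a).indicator (1 : ℝ → ℝ) s - (Iic b).indicator 1 s) ^ 2 =
      |a - b| := by
  wlog hba : b ≤ a generalizing a b
  · rw [abs_sub_comm, ← this hb ha (le_of_not_ge hba)]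
    congr 1 with s
    ring
  have hpt : ∀ s, ((Iic a).indicator (1 : ℝ → ℝ) s - (Iic b).indicator 1 s) ^ 2 =
      (Ioc b a).indicator 1 s := fun s => by
    by_cases hsb : s ≤ b
    · simp [indicator, hsb, hsb.trans hba, not_lt.mpr hsb]
    · by_cases hsa : s ≤ a <;> simp [indicator, hsb, hsa, lt_of_not_ge hsb]
  have hsub : Ioc b a ⊆ Icc l u := fun s hs => ⟨hb.1.trans hs.1.le, hs.2.trans ha.2⟩
  simp_rw [hpt]
  rw [integral_indicator_one measurableSet_Ioc, measureReal_restrict_apply measurableSet_Ioc,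
    inter_eq_self_of_subset_left hsub, Real.volume_real_Ioc_of_le hba,
    abs_of_nonneg (sub_nonneg.mpr hba)]

section Subgraph

variable {X : Type*} [MeasurableSpace X]

noncomputable def subgraphIndicator (f : X → ℝ) : X × ℝ → ℝ :=
  {p | p.2 ≤ f p.1}.indicator 1

lemma measurableSet_subgraph {f : X → ℝ} (hf : Measurable f) :
    MeasurableSet {p : X × ℝ | p.2 ≤ f p.1} :=
  measurableSet_le measurable_snd (hf.comp measurable_fst)

lemma integral_sq_sub_subgraphIndicator (μ : Measure X) [IsFiniteMeasure μ] {l u : ℝ}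
    {f g : X → ℝ} (hf : Measurable f) (hg : Measurable g)
    (hfI : ∀ᵐ x ∂μ, f x ∈ Icc l u) (hgI : ∀ᵐ x ∂μ, g x ∈ Icc l u) :
    ∫ p, (subgraphIndicator f p - subgraphIndicator g p) ^ 2
        ∂(μ.prod (volume.restrict (Icc l u))) = ∫ x, |f x - g x| ∂μ := by
  have hbound (p : X × ℝ) : ‖(subgraphIndicator f p - subgraphIndicator g p) ^ 2‖ ≤ 1 := by
    unfold subgraphIndicator
    by_cases h1 : p.2 ≤ f p.1 <;> by_cases h2 : p.2 ≤ g p.1 <;> simp [indicator, h1, h2]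
  have hmeas : Measurable fun p => (subgraphIndicator f p - subgraphIndicator g p) ^ 2 :=
    ((measurable_const.indicator (measurableSet_subgraph hf)).sub
      (measurable_const.indicator (measurableSet_subgraph hg))).pow_const 2
  rw [integral_prod _ (.of_bound hmeas.aestronglyMeasurable 1 (.of_forall hbound))]
  refine integral_congr_ae ((hfI.and hgI).mono fun x hx => ?_)
  exact integral_sq_indicator_Iic_sub hx.1 hx.2

theorem exists_sq_norm_sub_eq_integral_abs_sub (μ : Measure X) [IsFiniteMeasure μ] (l u : ℝ) :
    ∃ Ψ : (X → ℝ) → Lp ℝ 2 (μ.prod (volume.restrict (Icc l u))),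
      ∀ f g : X → ℝ, Measurable f → Measurable g →
        (∀ᵐ x ∂μ, f x ∈ Icc l u) → (∀ᵐ x ∂μ, g x ∈ Icc l u) →
          ‖Ψ f - Ψ g‖ ^ 2 = ∫ x, |f x - g x| ∂μ := by
  classical
  have hmem : ∀ f : X → ℝ, Measurable f →
      MemLp (subgraphIndicator f) 2 (μ.prod (volume.restrict (Icc l u))) := fun f hf =>
    memLp_indicator_const 2 (measurableSet_subgraph hf) 1 (Or.inr (measure_ne_top _ _))
  refine ⟨fun f => if hf : Measurable f then (hmem f hf).toLp _ else 0, ?_⟩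
  intro f g hf hg hfI hgI
  simp only [dif_pos hf, dif_pos hg]
  rw [← MemLp.toLp_sub, ← real_inner_self_eq_norm_sq, L2.inner_def,
    ← integral_sq_sub_subgraphIndicator μ hf hg hfI hgI]
  refine integral_congr_ae (((hmem f hf).sub (hmem g hg)).coeFn_toLp.mono fun p hp => ?_)
  simp [hp, sq]

end Subgraph

lemma measurable_map_prodMk_left {α β γ : Type*} [MeasurableSpace α]
    [MeasurableSpace β] [MeasurableSpace γ] (P : Measure β) [SFinite P] {f : α × β → γ}
    (hf : Measurable f) : Measurable fun a => P.map fun b => f (a, b) := by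
  refine Measure.measurable_of_measurable_coe _ fun s hs => ?_
  have h (a : α) : P.map (fun b => f (a, b)) s = P (Prod.mk a ⁻¹' (f ⁻¹' s)) :=
    Measure.map_apply (hf.comp measurable_prodMk_left) hs
  simpa only [h] using measurable_measure_prodMk_left (hf hs)

instance (r : ℕ) : IsFiniteMeasure (uniformSphere r) :=
  ⟨by
    rw [uniformSphere, Measure.smul_apply, smul_eq_mul]
    exact (ENNReal.inv_mul_le_one _).trans_lt ENNReal.one_lt_top⟩

instance isProbabilityMeasure_map_inner {E : Type*} [NormedAddCommGroup E]
    [InnerProductSpace ℝ E] [MeasurableSpace E] [OpensMeasurableSpace E] (P : Measure E)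
    [IsProbabilityMeasure P] (θ : E) : IsProbabilityMeasure (P.map fun x => ⟪x, θ⟫) :=
  Measure.isProbabilityMeasure_map (continuous_id.inner continuous_const).measurable.aemeasurable

lemma map_inner_Icc_eq_one {E : Type*} [NormedAddCommGroup E] [InnerProductSpace ℝ E]
    [MeasurableSpace E] [OpensMeasurableSpace E] {P : Measure E} [IsProbabilityMeasure P] {R : ℝ}
    (hP : P (Metric.closedBall 0 R) = 1) {θ : E} (hθ : ‖θ‖ ≤ 1) :
    (P.map fun x => ⟪x, θ⟫) (Icc (-R) R) = 1 := by
  have hinner : Measurable fun x : E => ⟪x, θ⟫ :=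
    (continuous_id.inner continuous_const).measurable
  refine le_antisymm prob_le_one ?_
  rw [Measure.map_apply hinner measurableSet_Icc, ← hP]
  refine measure_mono fun x hx => abs_le.mp ?_
  calc |⟪x, θ⟫| ≤ ‖x‖ * ‖θ‖ := abs_real_inner_le_norm x θ
    _ ≤ ‖x‖ := mul_le_of_le_one_right (norm_nonneg x) hθ
    _ ≤ R := mem_closedBall_zero_iff.mp hx

section Sliced

variable {r : ℕ}

noncomputable def slicedQuantile (P : Measure (EuclideanSpace ℝ (Fin r))) :
    Metric.sphere (0 : EuclideanSpace ℝ (Fin r)) 1 × ℝ → ℝ :=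
  fun p => invCDF (P.map fun x => ⟪x, (p.1 : EuclideanSpace ℝ (Fin r))⟫) p.2

variable {P Q : Measure (EuclideanSpace ℝ (Fin r))} [IsProbabilityMeasure P]
  [IsProbabilityMeasure Q] {R : ℝ}

lemma measurable_slicedQuantile (hP : P (Metric.closedBall 0 R) = 1) :
    Measurable (slicedQuantile P) := by
  have hIic (θ : Metric.sphere (0 : EuclideanSpace ℝ (Fin r)) 1) :
      (P.map fun x => ⟪x, (θ : EuclideanSpace ℝ (Fin r))⟫) (Iic R) = 1 := by
    have h1 := map_inner_Icc_eq_one hP (norm_eq_of_mem_sphere θ).le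
    exact le_antisymm prob_le_one (h1.symm.trans_le (measure_mono Icc_subset_Iic_self))
  have hinner : Continuous fun p : Metric.sphere (0 : EuclideanSpace ℝ (Fin r)) 1 ×
      EuclideanSpace ℝ (Fin r) => ⟪p.2, (p.1 : EuclideanSpace ℝ (Fin r))⟫ :=
    continuous_snd.inner (continuous_subtype_val.comp continuous_fst)
  have hκ : Measurable fun θ : Metric.sphere (0 : EuclideanSpace ℝ (Fin r)) 1 =>
      P.map fun x => ⟪x, (θ : EuclideanSpace ℝ (Fin r))⟫ :=
    measurable_map_prodMk_left P hinner.measurable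
  -- elaborated without the expected type: unifying with `slicedQuantile P` first is very slow
  exact (measurable_invCDF_uncurry hκ fun θ => ⟨R, hIic θ⟩ :)

lemma ae_slicedQuantile_mem_Icc (hP : P (Metric.closedBall 0 R) = 1) :
    ∀ᵐ p ∂(uniformSphere r).prod (volume.restrict (Ioc (0 : ℝ) 1)),
      slicedQuantile P p ∈ Icc (-R) R := by
  have hIoc : ∀ᵐ p ∂(uniformSphere r).prod (volume.restrict (Ioc (0 : ℝ) 1)),
      p.2 ∈ Ioc 0 1 :=
    (Measure.ae_prod_iff_ae_ae (measurable_snd measurableSet_Ioc)).mpr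
      (.of_forall fun _ => ae_restrict_mem measurableSet_Ioc)
  refine hIoc.mono fun p hp => ?_
  exact invCDF_mem_Icc (map_inner_Icc_eq_one hP (norm_eq_of_mem_sphere p.1).le) hp

lemma slicedW1_eq_integral_abs_sub (hP : P (Metric.closedBall 0 R) = 1)
    (hQ : Q (Metric.closedBall 0 R) = 1) :
    slicedW1 P Q = ∫ p, |slicedQuantile P p - slicedQuantile Q p|
      ∂(uniformSphere r).prod (volume.restrict (Ioc (0 : ℝ) 1)) := by
  have hbound : ∀ᵐ p ∂(uniformSphere r).prod (volume.restrict (Ioc (0 : ℝ) 1)),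
      ‖|slicedQuantile P p - slicedQuantile Q p|‖ ≤ 2 * R := by
    filter_upwards [ae_slicedQuantile_mem_Icc hP, ae_slicedQuantile_mem_Icc hQ] with p hPp hQp
    rw [norm_abs_eq_norm, Real.norm_eq_abs, abs_le]
    constructor <;> linarith [hPp.1, hPp.2, hQp.1, hQp.2]
  have hmeas : Measurable fun p => |slicedQuantile P p - slicedQuantile Q p| :=
    ((measurable_slicedQuantile hP).sub (measurable_slicedQuantile hQ)).abs
  rw [integral_prod _ (.of_bound hmeas.aestronglyMeasurable (2 * R) hbound)]
  rfl

end Sliced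

/-- **The square root of the Sliced 1-Wasserstein distance is Hilbertian.**
Let `Ω ⊂ ℝ^r` be compact.  There exist a real Hilbert space `F` and a map `Φ` from the
probability measures on `Ω` into `F` such that `d_{SW₁}(P,Q) = ‖Φ(P) − Φ(Q)‖²_F`
(i.e. `√d_{SW₁}(P,Q) = ‖Φ(P) − Φ(Q)‖_F`) for all probability measures `P, Q` on `Ω`. -/
theorem sqrt_slicedW1_hilbertian {r : ℕ} (Ω : Set (EuclideanSpace ℝ (Fin r)))
    (hΩ : IsCompact Ω) :
    ∃ (F : Type) (_ : NormedAddCommGroup F) (_ : InnerProductSpace ℝ F) (_ : CompleteSpace F)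
      (Φ : Measure (EuclideanSpace ℝ (Fin r)) → F),
      ∀ P Q : Measure (EuclideanSpace ℝ (Fin r)),
        IsProbabilityMeasure P → IsProbabilityMeasure Q → P Ω = 1 → Q Ω = 1 →
          slicedW1 P Q = ‖Φ P - Φ Q‖ ^ 2 := by
  obtain ⟨R, hΩR⟩ := hΩ.isBounded.subset_closedBall 0
  obtain ⟨Ψ, hΨ⟩ := exists_sq_norm_sub_eq_integral_abs_sub
    ((uniformSphere r).prod (volume.restrict (Ioc (0 : ℝ) 1))) (-R) R
  refine ⟨_, inferInstance, inferInstance, inferInstance, fun P => Ψ (slicedQuantile P), ?_⟩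
  intro P Q _ _ hPΩ hQΩ
  have hP : P (Metric.closedBall 0 R) = 1 := le_antisymm prob_le_one (hPΩ ▸ measure_mono hΩR)
  have hQ : Q (Metric.closedBall 0 R) = 1 := le_antisymm prob_le_one (hQΩ ▸ measure_mono hΩR)
  rw [slicedW1_eq_integral_abs_sub hP hQ, hΨ _ _ (measurable_slicedQuantile hP)
    (measurable_slicedQuantile hQ) (ae_slicedQuantile_mem_Icc hP)
    (ae_slicedQuantile_mem_Icc hQ)]
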